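/- Let D be a dataset distance measure, let T be a dataset whose points all lie in a linear subspace N of ℝ^m, and let S = {s_1,...,s_n} be any dataset. Let S̄ = {s̄_1,...,s̄_n} be the dataset of orthogonal projections of the points of S onto N. Then D(S̄, T) ≤ D(S, T). -/

import Mathlib

open scoped Classical

/-- A dataset distance measure on finite datasets (multisets of points) in ℝ^m. -/
structure IsDatasetDistance {m : ℕ}
    (D : Multiset (EuclideanSpace ℝ (Fin m)) → Multiset (EuclideanSpace ℝ (Fin m)) → ℝ) : Prop where
  nonneg : ∀ X X', 0 ≤ D X X'
  refl : ∀ X, D X X = 0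
  symm : ∀ X X', D X X' = D X' X
  /-- Axiom 2: replacing a point `d'` of `X` by a point `d` that is closer to `X'`
  does not increase the distance. -/
  replace : ∀ X X' (d' d : EuclideanSpace ℝ (Fin m)), d' ∈ X →
    (∀ x ∈ X', ‖d - x‖ ≤ ‖d' - x‖) → D (d ::ₘ X.erase d') X' ≤ D X X'
  /-- Axiom 3: adjoining a point of `X` to `X'` does not increase the distance. -/
  adjoin : ∀ X X' (d : EuclideanSpace ℝ (Fin m)), d ∈ X → D X (d ::ₘ X') ≤ D X X'

theorem Submodule.norm_starProjection_sub_le {E : Type*} [NormedAddCommGroup E]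
    [InnerProductSpace ℝ E] (K : Submodule ℝ E) [K.HasOrthogonalProjection] (v : E) {t : E}
    (ht : t ∈ K) : ‖K.starProjection v - t‖ ≤ ‖v - t‖ :=
  calc ‖K.starProjection v - t‖ = ‖K.starProjection (v - t)‖ := by
        rw [map_sub, K.starProjection_eq_self_iff.mpr ht]
    _ ≤ ‖v - t‖ := K.norm_starProjection_apply_le _

namespace IsDatasetDistance

variable {m : ℕ}
  {D : Multiset (EuclideanSpace ℝ (Fin m)) → Multiset (EuclideanSpace ℝ (Fin m)) → ℝ}

theorem cons_le (hD : IsDatasetDistance D) (X T : Multiset (EuclideanSpace ℝ (Fin m)))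
    {s d : EuclideanSpace ℝ (Fin m)} (hd : ∀ t ∈ T, ‖d - t‖ ≤ ‖s - t‖) :
    D (d ::ₘ X) T ≤ D (s ::ₘ X) T := by
  simpa using hD.replace (s ::ₘ X) T s d (Multiset.mem_cons_self _ _) hd

/-- The summand `R` holds the points already moved, so that the induction can move the
remaining ones one at a time. -/
theorem map_add_le (hD : IsDatasetDistance D) {T : Multiset (EuclideanSpace ℝ (Fin m))}
    {f : EuclideanSpace ℝ (Fin m) → EuclideanSpace ℝ (Fin m)}
    (S : Multiset (EuclideanSpace ℝ (Fin m)))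
    (hf : ∀ s ∈ S, ∀ t ∈ T, ‖f s - t‖ ≤ ‖s - t‖)
    (R : Multiset (EuclideanSpace ℝ (Fin m))) :
    D (S.map f + R) T ≤ D (S + R) T := by
  induction S using Multiset.induction_on generalizing R with
  | empty => simp
  | cons s S ih =>
    have hS := fun x hx => hf x (Multiset.mem_cons_of_mem hx)
    calc D ((s ::ₘ S).map f + R) T = D (S.map f + (f s ::ₘ R)) T := by
          rw [Multiset.map_cons, Multiset.cons_add, Multiset.add_cons]
      _ ≤ D (S + (f s ::ₘ R)) T := ih hS _
      _ = D (f s ::ₘ (S + R)) T := by rw [Multiset.add_cons]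
      _ ≤ D (s ::ₘ (S + R)) T := hD.cons_le _ T (hf s (Multiset.mem_cons_self _ _))
      _ = D ((s ::ₘ S) + R) T := by rw [Multiset.cons_add]

theorem map_le (hD : IsDatasetDistance D) {T : Multiset (EuclideanSpace ℝ (Fin m))}
    {f : EuclideanSpace ℝ (Fin m) → EuclideanSpace ℝ (Fin m)}
    (S : Multiset (EuclideanSpace ℝ (Fin m)))
    (hf : ∀ s ∈ S, ∀ t ∈ T, ‖f s - t‖ ≤ ‖s - t‖) : D (S.map f) T ≤ D S T := by
  simpa using hD.map_add_le S hf 0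

end IsDatasetDistance

/-- projecting every point of a dataset `S` onto a subspace `N` containing all
points of `T` does not increase the dataset distance to `T`. -/
theorem stmt_2 {m : ℕ}
    (D : Multiset (EuclideanSpace ℝ (Fin m)) → Multiset (EuclideanSpace ℝ (Fin m)) → ℝ)
    (hD : IsDatasetDistance D)
    (N : Submodule ℝ (EuclideanSpace ℝ (Fin m)))
    (T : Multiset (EuclideanSpace ℝ (Fin m))) (hT : ∀ t ∈ T, t ∈ N)
    (S : Multiset (EuclideanSpace ℝ (Fin m))) :
    D (S.map (fun s => (N.orthogonalProjection s : EuclideanSpace ℝ (Fin m)))) T ≤ D S T :=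
  hD.map_le S fun s _ t ht => N.norm_starProjection_sub_le s (hT t ht)
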